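/- (Global solution of the augmented Lagrangian subproblem, one-dimensional instance.) Fix real parameters q, c, d, e, a fixed multiplier μ ∈ ℝ, and a penalty parameter ν > 0. Let h(x) = ½(½x² − d)² − e and define the subproblem objective L(x) = ½qx² − cx + μh(x) + (1/(2ν))h(x)², and the total complementarity function Ξ₁ᵛ(x, τ, σ) = ½(q + (μ+τ)σ)x² − cx − (μ+τ)(½σ² + σd + e) − ½ντ². Suppose (x̄, τ̄, σ̄) ∈ ℝ³ is a critical point of Ξ₁ᵛ (all three partial derivatives vanish), with μ + τ̄ > 0 and q + (μ+τ̄)σ̄ > 0. Then L(x̄) = Ξ₁ᵛ(x̄, τ̄, σ̄), τ̄ = h(x̄)/ν, and x̄ is a global minimizer of L on ℝ: L(x̄) ≤ L(x) for all x ∈ ℝ. -/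

import Mathlib

/-!
The subproblem objective splits as
`L(x) = Ξ₁ᵛ(x, τ, σ) + ½(μ+τ)(½x² − d − σ)² + (h(x) − ντ)²/(2ν)` for every `x, τ, σ`:
the two gap terms are the Fenchel–Young gaps of `V` at `(½x², σ)` and of `t ↦ t²/(2ν)` at
`(h(x), τ)`. On `S⁺` both are nonnegative, so `L(x) ≥ Ξ₁ᵛ(x, τ̄, σ̄)`; the critical point equations
in `σ` and `τ` make both gaps vanish at `x̄`, and the one in `x` makes the convex quadratic
`x ↦ Ξ₁ᵛ(x, τ̄, σ̄)` minimal at `x̄`. Hence `L(x̄) = Ξ₁ᵛ(x̄, τ̄, σ̄) ≤ Ξ₁ᵛ(x, τ̄, σ̄) ≤ L(x)`.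
-/

/-- The constraint function `h(x) = ½(½x² − d)² − e`. -/
noncomputable def hCon (d e : ℝ) (x : ℝ) : ℝ :=
  (1/2) * ((1/2) * x ^ 2 - d) ^ 2 - e

/-- The augmented Lagrangian subproblem objective
`L_{ν,μ}(x) = ½qx² − cx + μh(x) + (1/(2ν))h(x)²`. -/
noncomputable def Lsub (q c d e μ ν : ℝ) (x : ℝ) : ℝ :=
  (1/2) * q * x ^ 2 - c * x + μ * hCon d e x + (1 / (2 * ν)) * (hCon d e x) ^ 2

/-- The total complementarity function of the subproblem:
`Ξ₁ᵛ(x, τ, σ) = ½(q + (μ+τ)σ)x² − cx − (μ+τ)(½σ² + σd + e) − ½ντ²`. -/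
noncomputable def XiAug (q c d e μ ν : ℝ) (x τ σ : ℝ) : ℝ :=
  (1/2) * (q + (μ + τ) * σ) * x ^ 2 - c * x
    - (μ + τ) * (σ ^ 2 / 2 + σ * d + e) - (1/2) * ν * τ ^ 2

theorem hasDerivAt_quadratic (a b k x : ℝ) :
    HasDerivAt (fun y => a * y ^ 2 + b * y + k) (2 * a * x + b) x := by
  simpa [mul_comm, mul_left_comm] using
    (((hasDerivAt_pow 2 x).const_mul a).add ((hasDerivAt_id x).const_mul b)).add_const k

section XiAug

variable (q c d e μ ν : ℝ)

theorem deriv_XiAug_x (x τ σ : ℝ) :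
    deriv (fun x => XiAug q c d e μ ν x τ σ) x = (q + (μ + τ) * σ) * x - c := by
  convert (hasDerivAt_quadratic ((q + (μ + τ) * σ) / 2) (-c)
    (-(μ + τ) * (σ ^ 2 / 2 + σ * d + e) - ν * τ ^ 2 / 2) x).deriv using 1
  · congr 1; funext y; unfold XiAug; ring
  · ring

theorem deriv_XiAug_tau (x τ σ : ℝ) :
    deriv (fun τ => XiAug q c d e μ ν x τ σ) τ
      = σ * x ^ 2 / 2 - (σ ^ 2 / 2 + σ * d + e) - ν * τ := by
  convert (hasDerivAt_quadratic (-ν / 2) (σ * x ^ 2 / 2 - (σ ^ 2 / 2 + σ * d + e))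
    ((q + μ * σ) * x ^ 2 / 2 - c * x - μ * (σ ^ 2 / 2 + σ * d + e)) τ).deriv using 1
  · congr 1; funext t; unfold XiAug; ring
  · ring

theorem deriv_XiAug_sigma (x τ σ : ℝ) :
    deriv (fun σ => XiAug q c d e μ ν x τ σ) σ = (μ + τ) * (x ^ 2 / 2 - d - σ) := by
  convert (hasDerivAt_quadratic (-(μ + τ) / 2) ((μ + τ) * (x ^ 2 / 2 - d))
    (q * x ^ 2 / 2 - c * x - (μ + τ) * e - ν * τ ^ 2 / 2) σ).deriv using 1
  · congr 1; funext s; unfold XiAug; ring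
  · ring

theorem Lsub_eq_XiAug_add (hν : ν ≠ 0) (x τ σ : ℝ) :
    Lsub q c d e μ ν x = XiAug q c d e μ ν x τ σ + (μ + τ) / 2 * (x ^ 2 / 2 - d - σ) ^ 2
      + (hCon d e x - ν * τ) ^ 2 / (2 * ν) := by
  unfold Lsub XiAug hCon
  field_simp
  ring

theorem XiAug_le_Lsub (hν : 0 < ν) {τ : ℝ} (hμτ : 0 ≤ μ + τ) (x σ : ℝ) :
    XiAug q c d e μ ν x τ σ ≤ Lsub q c d e μ ν x := by
  rw [Lsub_eq_XiAug_add q c d e μ ν hν.ne' x τ σ]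
  have : 0 ≤ (μ + τ) / 2 * (x ^ 2 / 2 - d - σ) ^ 2 := by positivity
  have : 0 ≤ (hCon d e x - ν * τ) ^ 2 / (2 * ν) := by positivity
  linarith

theorem Lsub_eq_XiAug_of_gaps_eq_zero (hν : ν ≠ 0) {x τ σ : ℝ} (hσ : σ = x ^ 2 / 2 - d)
    (hτ : ν * τ = hCon d e x) : Lsub q c d e μ ν x = XiAug q c d e μ ν x τ σ := by
  rw [Lsub_eq_XiAug_add q c d e μ ν hν x τ σ, hσ, hτ]
  ring

theorem XiAug_le_XiAug_of_critical {xb τ σ : ℝ} (hG : 0 ≤ q + (μ + τ) * σ)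
    (hcrit : (q + (μ + τ) * σ) * xb = c) (x : ℝ) :
    XiAug q c d e μ ν xb τ σ ≤ XiAug q c d e μ ν x τ σ := by
  have hdiff : XiAug q c d e μ ν x τ σ - XiAug q c d e μ ν xb τ σ
      = (q + (μ + τ) * σ) / 2 * (x - xb) ^ 2 := by
    unfold XiAug
    linear_combination (x - xb) * hcrit
  have : 0 ≤ (q + (μ + τ) * σ) / 2 * (x - xb) ^ 2 := by positivity
  linarith

end XiAug

/-- Global solution of the augmented Lagrangian subproblem,
one-dimensional instance: if `(x̄, τ̄, σ̄)` is a critical point of `Ξ₁ᵛ`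
with `μ + τ̄ > 0` and `q + (μ+τ̄)σ̄ > 0` (and `ν > 0`), then
`L(x̄) = Ξ₁ᵛ(x̄, τ̄, σ̄)`, `τ̄ = h(x̄)/ν`, and `x̄` is a global minimizer of
the subproblem objective `L` on `ℝ`. -/
theorem augmented_subproblem_global_min
    (q c d e μ ν : ℝ) (hν : 0 < ν) (xb τb σb : ℝ)
    (hx : deriv (fun x => XiAug q c d e μ ν x τb σb) xb = 0)
    (hτ : deriv (fun τ => XiAug q c d e μ ν xb τ σb) τb = 0)
    (hσ : deriv (fun σ => XiAug q c d e μ ν xb τb σ) σb = 0)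
    (hμτ : 0 < μ + τb) (hG : 0 < q + (μ + τb) * σb) :
    Lsub q c d e μ ν xb = XiAug q c d e μ ν xb τb σb ∧
    τb = hCon d e xb / ν ∧
    ∀ x : ℝ, Lsub q c d e μ ν xb ≤ Lsub q c d e μ ν x := by
  rw [deriv_XiAug_x] at hx
  rw [deriv_XiAug_tau] at hτ
  rw [deriv_XiAug_sigma, mul_eq_zero] at hσ
  have hσb : σb = xb ^ 2 / 2 - d := by
    rcases hσ with h | h
    · exact absurd h hμτ.ne'
    · linarith
  have hτb : ν * τb = hCon d e xb := by
    unfold hCon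
    subst hσb
    linear_combination -hτ
  have hL := Lsub_eq_XiAug_of_gaps_eq_zero q c d e μ ν hν.ne' hσb hτb
  refine ⟨hL, eq_div_of_mul_eq hν.ne' (by linarith), fun x => ?_⟩
  calc Lsub q c d e μ ν xb = XiAug q c d e μ ν xb τb σb := hL
    _ ≤ XiAug q c d e μ ν x τb σb :=
      XiAug_le_XiAug_of_critical q c d e μ ν hG.le (by linarith) x
    _ ≤ Lsub q c d e μ ν x := XiAug_le_Lsub q c d e μ ν hν hμτ.le x σb
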